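/- Under within-type exchangeability, for every type i ∈ {1,…,L} and every τ ≥ 0, letting N_i(τ) := #{j : T^{(i)}_j ≤ τ} be the number of failed type-i components by time τ: E[ N_i(τ) · 1{T > τ} ] = Σ_{j_1=0}^{n_1} ⋯ Σ_{j_L=0}^{n_L} j_i · Φ(n_1−j_1, …, n_L−j_L) · (∏_{l=1}^L C(n_l, j_l)) · B(τ; j), where B(τ; j) := P( for each l: T^{(l)}_r ≤ τ for 1 ≤ r ≤ j_l and T^{(l)}_r > τ for j_l < r ≤ n_l ). -/

import Mathlib

open MeasureTheory Finset

/-- The survival signature of a structure function `φ`: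
`Φ(c) = (∏_k C(n_k, c_k))⁻¹ · Σ_{x : exactly c_k working components of each type k} φ(x)`. -/
noncomputable def survSig {L : ℕ} (n : Fin L → ℕ)
    (φ : ((l : Fin L) → Fin (n l) → Bool) → Bool) (c : Fin L → ℕ) : ℝ :=
  (∑ x : (l : Fin L) → Fin (n l) → Bool,
      if (∀ l, (Finset.univ.filter fun j => x l j = true).card = c l) ∧ φ x = true
      then (1 : ℝ) else 0)
    / ∏ l, (Nat.choose (n l) (c l) : ℝ)

/-!
Split the expectation over the value `x` of the state vector at time `τ`: on `{X(τ) = x}` the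
integrand is `φ(x)` times the number of failed type-`i` components of `x`. Within-type
exchangeability makes `P(X(τ) = x)` depend only on the vector `j` of failure counts of `x`, so it
equals `B(τ; j)`, the probability of the state in which exactly the first `j_l` components of each
type have failed. Grouping the states by `j`, the number of states with failure counts `j` and
`φ(x) = 1` is `Φ(n - j) ∏_l C(n_l, j_l)`.
-/

theorem Equiv.Perm.exists_comp_eq_of_card_fiber_eq {α β : Type*} [Finite α] (f g : α → β)
    (h : ∀ b, Nat.card {a // f a = b} = Nat.card {a // g a = b}) :
    ∃ σ : Equiv.Perm α, f ∘ σ = g := by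
  have e : ∀ b, {a // g a = b} ≃ {a // f a = b} := fun b => (Finite.card_eq.mp (h b).symm).some
  refine ⟨(Equiv.sigmaFiberEquiv g).symm.trans
    ((Equiv.sigmaCongrRight e).trans (Equiv.sigmaFiberEquiv f)), ?_⟩
  funext a
  exact (e (g a) ⟨a, rfl⟩).2

theorem Bool.exists_perm_comp_eq {α : Type*} [Fintype α] (x y : α → Bool)
    (h : #{a | x a = false} = #{a | y a = false}) :
    ∃ σ : Equiv.Perm α, x ∘ σ = y := by
  refine Equiv.Perm.exists_comp_eq_of_card_fiber_eq x y fun b => ?_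
  have hcompl (z : α → Bool) : #{a | z a = true} = Fintype.card α - #{a | z a = false} := by
    have := card_filter_add_card_filter_not (s := univ) fun a => z a = true
    simp only [Bool.not_eq_true, card_univ] at this
    omega
  cases b <;> simp [Nat.card_eq_fintype_card, Fintype.card_subtype, hcompl, h]

theorem integral_comp_eq_sum_measureReal {Ω β E : Type*} [MeasurableSpace Ω] [Fintype β]
    [MeasurableSpace β] [MeasurableSingletonClass β] [NormedAddCommGroup E] [NormedSpace ℝ E]
    [CompleteSpace E] (P : Measure Ω) [IsFiniteMeasure P] {Y : Ω → β} (hY : Measurable Y)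
    (g : β → E) :
    ∫ ω, g (Y ω) ∂P = ∑ b, P.real (Y ⁻¹' {b}) • g b := by
  rw [← integral_map hY.aemeasurable AEStronglyMeasurable.of_discrete,
    integral_fintype Integrable.of_finite]
  simp [map_measureReal_apply hY]

section StateVectors

variable {L : ℕ} {n : Fin L → ℕ}

noncomputable def stateAt (τ : ℝ) (t : (l : Fin L) → Fin (n l) → ℝ) :
    (l : Fin L) → Fin (n l) → Bool :=
  fun l r => decide (τ < t l r)

def numFailed (x : (l : Fin L) → Fin (n l) → Bool) (l : Fin L) : Fin (n l + 1) :=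
  ⟨#{r | x l r = false}, Nat.lt_succ_of_le ((card_filter_le _ _).trans_eq (card_fin _))⟩

def firstFailed (j : (l : Fin L) → Fin (n l + 1)) : (l : Fin L) → Fin (n l) → Bool :=
  fun l r => decide ((j l : ℕ) ≤ r)

theorem measurable_stateAt (τ : ℝ) : Measurable (stateAt (n := n) τ) :=
  measurable_pi_lambda _ fun l => measurable_pi_lambda _ fun r =>
    measurable_to_bool <| by
      have hm : Measurable fun t : (l : Fin L) → Fin (n l) → ℝ => t l r := by fun_prop
      convert measurableSet_lt (measurable_const (a := τ)) hm using 1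
      ext; simp [stateAt]

theorem numFailed_stateAt (τ : ℝ) (t : (l : Fin L) → Fin (n l) → ℝ) (l : Fin L) :
    (numFailed (stateAt τ t) l : ℕ) = #{r | t l r ≤ τ} := by
  simp [numFailed, stateAt]

theorem numFailed_firstFailed (j : (l : Fin L) → Fin (n l + 1)) :
    numFailed (firstFailed j) = j := by
  funext l
  ext
  simpa [numFailed, firstFailed, Fin.card_filter_val_lt] using Nat.lt_succ_iff.mp (j l).2

theorem numFailed_eq_iff (x : (l : Fin L) → Fin (n l) → Bool) (j : (l : Fin L) → Fin (n l + 1)) :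
    numFailed x = j ↔ ∀ l, #{r | x l r = true} = n l - j l := by
  have hsplit (l : Fin L) : #{r | x l r = true} + #{r | x l r = false} = n l := by
    simpa using card_filter_add_card_filter_not (s := univ) fun r => x l r = true
  simp only [funext_iff, Fin.ext_iff, numFailed]
  refine forall_congr' fun l => ?_
  have := hsplit l
  have := (j l).isLt
  omega

theorem stateAt_eq_firstFailed_iff (τ : ℝ) (t : (l : Fin L) → Fin (n l) → ℝ)
    (j : (l : Fin L) → Fin (n l + 1)) :
    stateAt τ t = firstFailed j ↔ ∀ l, ∀ r : Fin (n l),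
      ((r : ℕ) < (j l : ℕ) → t l r ≤ τ) ∧ ((j l : ℕ) ≤ (r : ℕ) → τ < t l r) := by
  simp only [funext_iff, stateAt, firstFailed, decide_eq_decide]
  refine forall_congr' fun l => forall_congr' fun r => ?_
  constructor
  · intro h
    exact ⟨fun hr => not_lt.mp fun h' => absurd (h.mp h') (not_le.mpr hr), h.mpr⟩
  · rintro ⟨h₁, h₂⟩
    exact ⟨fun h => not_lt.mp fun hr => absurd h (not_lt.mpr (h₁ hr)), h₂⟩

theorem survSig_mul_prod_choose (φ : ((l : Fin L) → Fin (n l) → Bool) → Bool)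
    (j : (l : Fin L) → Fin (n l + 1)) :
    survSig n φ (fun l => n l - j l) * ∏ l, ((n l).choose (j l) : ℝ)
      = ∑ x with numFailed x = j, if φ x = true then 1 else 0 := by
  have hchoose : ∏ l, ((n l).choose (n l - j l) : ℝ) = ∏ l, ((n l).choose (j l) : ℝ) :=
    prod_congr rfl fun l _ => by rw [Nat.choose_symm (Nat.lt_succ_iff.mp (j l).2)]
  have hpos : ∏ l, ((n l).choose (j l) : ℝ) ≠ 0 :=
    prod_ne_zero_iff.mpr fun l _ => by
      exact_mod_cast (Nat.choose_pos (Nat.lt_succ_iff.mp (j l).2)).ne'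
  rw [survSig, hchoose, div_mul_cancel₀ _ hpos, sum_filter]
  simp only [← numFailed_eq_iff, ite_and]

theorem sum_numFailed_mul_eq_sum_survSig (φ : ((l : Fin L) → Fin (n l) → Bool) → Bool)
    (i : Fin L) (B : ((l : Fin L) → Fin (n l + 1)) → ℝ) :
    ∑ x, (if φ x = true then (numFailed x i : ℝ) else 0) * B (numFailed x)
      = ∑ j, (j i : ℝ) * survSig n φ (fun l => n l - j l)
          * (∏ l, ((n l).choose (j l) : ℝ)) * B j := by
  rw [← sum_fiberwise univ numFailed]
  refine sum_congr rfl fun j _ => ?_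
  rw [mul_assoc (j i : ℝ), survSig_mul_prod_choose, mul_sum, sum_mul]
  refine sum_congr rfl fun x hx => ?_
  rw [(mem_filter.mp hx).2]
  split_ifs <;> ring

theorem measure_stateAt_eq_of_numFailed_eq {Ω : Type*} [MeasurableSpace Ω] {P : Measure Ω}
    {X : Ω → (l : Fin L) → Fin (n l) → ℝ} (hX : Measurable X)
    (hexch : ∀ σ : (l : Fin L) → Equiv.Perm (Fin (n l)),
      P.map (fun ω l r => X ω l (σ l r)) = P.map X)
    (τ : ℝ) {x y : (l : Fin L) → Fin (n l) → Bool} (h : numFailed x = numFailed y) :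
    P {ω | stateAt τ (X ω) = x} = P {ω | stateAt τ (X ω) = y} := by
  choose σ hσ using fun l =>
    Bool.exists_perm_comp_eq (x l) (y l) (congrArg Fin.val (congrFun h l))
  have hy : y = fun l r => x l (σ l r) := funext fun l => (hσ l).symm
  have hXσ : Measurable fun ω l r => X ω l (σ l r) := by fun_prop
  have hS := measurable_stateAt τ (measurableSet_singleton y)
  have hpre : (fun ω l r => X ω l (σ l r)) ⁻¹' (stateAt τ ⁻¹' {y})
      = {ω | stateAt τ (X ω) = x} := by
    ext ω
    simp only [Set.mem_preimage, Set.mem_singleton_iff, Set.mem_ofPred_eq, hy]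
    refine ⟨fun hω => funext fun l => funext fun r => ?_, fun hω => by subst hω; rfl⟩
    simpa [stateAt] using congrFun (congrFun hω l) ((σ l).symm r)
  calc P {ω | stateAt τ (X ω) = x}
      = P.map (fun ω l r => X ω l (σ l r)) (stateAt τ ⁻¹' {y}) := by
        rw [Measure.map_apply hXσ hS, hpre]
    _ = P.map X (stateAt τ ⁻¹' {y}) := by rw [hexch]
    _ = P {ω | stateAt τ (X ω) = y} := Measure.map_apply hX hS

end StateVectors

theorem stmt_9_general
    {Ω : Type*} [MeasurableSpace Ω] (P : Measure Ω) [IsProbabilityMeasure P]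
    {L : ℕ} (n : Fin L → ℕ)
    (T : (l : Fin L) → Fin (n l) → Ω → ℝ)
    (hTmeas : ∀ l j, Measurable (T l j))
    (hexch : ∀ σ : (l : Fin L) → Equiv.Perm (Fin (n l)),
      Measure.map (fun ω (l : Fin L) (j : Fin (n l)) => T l (σ l j) ω) P
        = Measure.map (fun ω (l : Fin L) (j : Fin (n l)) => T l j ω) P)
    (φ : ((l : Fin L) → Fin (n l) → Bool) → Bool)
    (Tsys : Ω → ℝ)
    (hT : ∀ t : ℝ, 0 ≤ t →
      {ω | t < Tsys ω} = {ω | φ (fun l j => decide (t < T l j ω)) = true})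
    (i : Fin L) (τ : ℝ) (hτ : 0 ≤ τ) :
    ∫ ω, (if τ < Tsys ω
        then ((Finset.univ.filter fun j : Fin (n i) => T i j ω ≤ τ).card : ℝ)
        else 0) ∂P
    = ∑ j : (l : Fin L) → Fin (n l + 1),
        (j i : ℝ) * survSig n φ (fun l => n l - (j l : ℕ))
          * (∏ l, (Nat.choose (n l) (j l) : ℝ))
          * (P {ω | ∀ l, ∀ r : Fin (n l),
              ((r : ℕ) < (j l : ℕ) → T l r ω ≤ τ)
              ∧ ((j l : ℕ) ≤ (r : ℕ) → τ < T l r ω)}).toReal := by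
  set X : Ω → (l : Fin L) → Fin (n l) → ℝ := fun ω l j => T l j ω
  have hX : Measurable X := measurable_pi_lambda _ fun l => measurable_pi_lambda _ (hTmeas l)
  set B : ((l : Fin L) → Fin (n l + 1)) → ℝ :=
    fun j => P.real {ω | stateAt τ (X ω) = firstFailed j}
  have hintegrand (ω : Ω) : (if τ < Tsys ω
      then ((Finset.univ.filter fun j : Fin (n i) => T i j ω ≤ τ).card : ℝ) else 0)
      = if φ (stateAt τ (X ω)) = true then (numFailed (stateAt τ (X ω)) i : ℝ) else 0 := by
    have hsys : τ < Tsys ω ↔ φ (stateAt τ (X ω)) = true := Set.ext_iff.mp (hT τ hτ) ω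
    simp only [hsys, numFailed_stateAt, X]
  have hstate (x : (l : Fin L) → Fin (n l) → Bool) :
      P.real {ω | stateAt τ (X ω) = x} = B (numFailed x) :=
    congrArg ENNReal.toReal
      (measure_stateAt_eq_of_numFailed_eq hX hexch τ (numFailed_firstFailed _).symm)
  have hB (j : (l : Fin L) → Fin (n l + 1)) : (P {ω | ∀ l, ∀ r : Fin (n l),
      ((r : ℕ) < (j l : ℕ) → T l r ω ≤ τ) ∧ ((j l : ℕ) ≤ (r : ℕ) → τ < T l r ω)}).toReal
      = B j := by
    simp only [B, stateAt_eq_firstFailed_iff, measureReal_def]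
    rfl
  simp only [hintegrand, hB]
  rw [← sum_numFailed_mul_eq_sum_survSig]
  refine (integral_comp_eq_sum_measureReal P ((measurable_stateAt τ).comp hX)
    fun x => if φ x = true then (numFailed x i : ℝ) else 0).trans ?_
  exact sum_congr rfl fun x _ => by rw [smul_eq_mul, mul_comm, ← hstate]; rfl

/-- Under within-type exchangeability, with `N_i(τ)` the number of failed
type-`i` components by time `τ`,
`E[N_i(τ)·1{T>τ}] = Σ_j j_i Φ(n−j) (∏_l C(n_l, j_l)) B(τ; j)`, where `B(τ; j)` is the
probability that exactly the first `j_l` components of each type have failed by `τ`. -/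
theorem stmt_9
    {Ω : Type*} [MeasurableSpace Ω] (P : Measure Ω) [IsProbabilityMeasure P]
    {L : ℕ} (hL : 1 ≤ L) (n : Fin L → ℕ) (hn : ∀ l, 1 ≤ n l)
    (T : (l : Fin L) → Fin (n l) → Ω → ℝ)
    (hTmeas : ∀ l j, Measurable (T l j))
    (hexch : ∀ σ : (l : Fin L) → Equiv.Perm (Fin (n l)),
      Measure.map (fun ω (l : Fin L) (j : Fin (n l)) => T l (σ l j) ω) P
        = Measure.map (fun ω (l : Fin L) (j : Fin (n l)) => T l j ω) P)
    (φ : ((l : Fin L) → Fin (n l) → Bool) → Bool) (hφ : Monotone φ)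
    (Tsys : Ω → ℝ) (hTsys : Measurable Tsys)
    (hT : ∀ t : ℝ, 0 ≤ t →
      {ω | t < Tsys ω} = {ω | φ (fun l j => decide (t < T l j ω)) = true})
    (i : Fin L) (τ : ℝ) (hτ : 0 ≤ τ) :
    ∫ ω, (if τ < Tsys ω
        then ((Finset.univ.filter fun j : Fin (n i) => T i j ω ≤ τ).card : ℝ)
        else 0) ∂P
    = ∑ j : (l : Fin L) → Fin (n l + 1),
        (j i : ℝ) * survSig n φ (fun l => n l - (j l : ℕ))
          * (∏ l, (Nat.choose (n l) (j l) : ℝ))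
          * (P {ω | ∀ l, ∀ r : Fin (n l),
              ((r : ℕ) < (j l : ℕ) → T l r ω ≤ τ)
              ∧ ((j l : ℕ) ≤ (r : ℕ) → τ < T l r ω)}).toReal :=
  stmt_9_general P n T hTmeas hexch φ Tsys hT i τ hτ
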